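/- arXiv:1905.00573 — 3 statements merged into one kernel-verified Lean document; each statement's English description precedes it below -/
import Mathlib

section
/- Define integer sequences by Q(0)=1, Q(1)=2+x, Q(2)=3+2x, Q(3)=4+3x, Q(4)=6+6x+x², and Q(n)=Q(n−1)+(1+x)Q(n−2) for n ≥ 5 (as polynomials in x over ℤ). Then for all n ≥ 3, the constant coefficient of Q(n) equals 2·F(n), where F is the Fibonacci sequence. -/
/-! Evaluating the recurrence at `0` kills the factor `1 + X`, so the constant coefficients of `Q`
obey the Fibonacci recurrence from index `3` on, and they start with `4, 6 = 2 F(3), 2 F(4)`. -/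

open Polynomial

noncomputable def Q : ℕ → Polynomial ℤ
  | 0 => 1
  | 1 => 2 + X
  | 2 => 3 + 2 * X
  | 3 => 4 + 3 * X
  | 4 => 6 + 6 * X + X ^ 2
  | (n + 5) => Q (n + 4) + (1 + X) * Q (n + 3)

theorem eq_of_fib_recurrence {α : Type*} [Add α] {a b : ℕ → α}
    (ha : ∀ n, a (n + 2) = a (n + 1) + a n) (hb : ∀ n, b (n + 2) = b (n + 1) + b n)
    (h0 : a 0 = b 0) (h1 : a 1 = b 1) (n : ℕ) : a n = b n := by
  induction n using Nat.twoStepInduction with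
  | zero => exact h0
  | one => exact h1
  | more n ih₀ ih₁ => rw [ha, hb, ih₀, ih₁]

theorem Q_coeff_zero_add_five (n : ℕ) :
    (Q (n + 5)).coeff 0 = (Q (n + 4)).coeff 0 + (Q (n + 3)).coeff 0 := by
  rw [Q, coeff_add, mul_coeff_zero]
  simp

theorem Q_coeff_zero (n : ℕ) (hn : 3 ≤ n) :
    (Q n).coeff 0 = 2 * (Nat.fib n : ℤ) := by
  obtain ⟨m, rfl⟩ := Nat.exists_eq_add_of_le' hn
  refine eq_of_fib_recurrence (a := fun m ↦ (Q (m + 3)).coeff 0)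
    (b := fun m ↦ 2 * (Nat.fib (m + 3) : ℤ)) Q_coeff_zero_add_five (fun m ↦ ?_) ?_ ?_ m
  · simp only [Nat.fib_add_two, Nat.cast_add]
    ring
  · simp [Q, Nat.fib_add_two]
  · simp [Q, Nat.fib_add_two]
end

section
/- Define polynomials Q(n) ∈ ℤ[x] by Q(0)=1, Q(1)=2+x, Q(2)=3+2x, Q(3)=4+3x, Q(4)=6+6x+x², Q(n)=Q(n−1)+(1+x)Q(n−2) for n ≥ 5. Then for all n ≥ 0, Q(n) = ∑_{j=0}^{⌊(n+1)/2⌋} binom(n−j+1, j)(1+x)^j − ∑_{j=2}^{⌊(n+1)/2⌋} binom(n−j−1, j−2)(1+x)^j − ∑_{j=2}^{⌊n/2⌋} binom(n−j−2, j−2)(1+x)^j. -/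
/-!
With `y = 1 + x`, the sums `f M = ∑ⱼ binom(M - j, j) yʲ` obey Pascal's rule in the form
`f (M + 2) = f (M + 1) + y f M`. Shifting `j ↦ j - 2` in the two subtracted sums turns the
right-hand side, for `n ≥ 4`, into `f (n + 1) - y² (f (n - 3) + f (n - 4))`, a combination of
shifts of `f` that obeys the recurrence of `Q`. So it suffices to compare at `n = 4, 5`, and to
check `n ≤ 3` directly.
-/

open Polynomial Finset

lemma Nat.choose_succ_sub_succ (M i : ℕ) :
    (M + 1 - i).choose (i + 1) = (M - i).choose i + (M - i).choose (i + 1) := by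
  rcases le_or_gt i M with h | h
  · rw [show M + 1 - i = M - i + 1 by omega, Nat.choose_succ_succ']
  · rw [show M + 1 - i = 0 by omega, show M - i = 0 by omega,
      Nat.choose_eq_zero_of_lt (by omega : 0 < i), zero_add]

section FibPoly

variable {R : Type*} [CommSemiring R] (y : R)

def fibPoly (M : ℕ) : R := ∑ j ∈ range (M / 2 + 1), ((M - j).choose j : R) * y ^ j

lemma fibPoly_eq_sum_range {M K : ℕ} (hK : M / 2 < K) :
    fibPoly y M = ∑ j ∈ range K, ((M - j).choose j : R) * y ^ j := by
  refine sum_subset (range_subset_range.2 (by omega)) fun j _ hj => ?_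
  rw [mem_range] at hj
  rw [Nat.choose_eq_zero_of_lt (by omega), Nat.cast_zero, zero_mul]

@[simp] lemma fibPoly_zero : fibPoly y 0 = 1 := by simp [fibPoly]

@[simp] lemma fibPoly_one : fibPoly y 1 = 1 := by simp [fibPoly]

lemma fibPoly_add_two (M : ℕ) : fibPoly y (M + 2) = fibPoly y (M + 1) + y * fibPoly y M := by
  rw [fibPoly_eq_sum_range y (K := M + 3) (by omega), sum_range_succ',
    fibPoly_eq_sum_range y (M := M + 1) (K := M + 3) (by omega), sum_range_succ' _ (M + 2),
    fibPoly_eq_sum_range y (M := M) (K := M + 2) (by omega), mul_sum]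
  have pascal : ∀ i, ((M + 2 - (i + 1)).choose (i + 1) : R) * y ^ (i + 1) =
      ((M + 1 - (i + 1)).choose (i + 1) : R) * y ^ (i + 1)
        + y * (((M - i).choose i : R) * y ^ i) := by
    intro i
    rw [show M + 2 - (i + 1) = M + 1 - i by omega, show M + 1 - (i + 1) = M - i by omega,
      Nat.choose_succ_sub_succ]
    push_cast
    ring
  simp only [pascal, sum_add_distrib, Nat.choose_zero_right]
  ring

lemma sum_Icc_two_choose_eq {M N : ℕ} (f : ℕ → ℕ) (hN : N = M / 2 + 2)
    (hf : ∀ j, 2 ≤ j → f j = M - (j - 2)) :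
    ∑ j ∈ Icc 2 N, ((f j).choose (j - 2) : R) * y ^ j = y ^ 2 * fibPoly y M := by
  rw [hN, show Icc 2 (M / 2 + 2) = Ico (0 + 2) (M / 2 + 1 + 2) by ext; simp; omega,
    ← sum_Ico_add', ← range_eq_Ico, fibPoly, mul_sum]
  refine sum_congr rfl fun i _ => ?_
  rw [hf _ (by omega), Nat.add_sub_cancel, pow_add]
  ring

lemma sum_range_choose_eq_fibPoly (n : ℕ) :
    ∑ j ∈ range ((n + 1) / 2 + 1), ((n - j + 1).choose j : R) * y ^ j = fibPoly y (n + 1) :=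
  sum_congr rfl fun j hj => by
    rw [mem_range] at hj
    rw [show n - j + 1 = n + 1 - j by omega]

end FibPoly

lemma Q_add_four (m : ℕ) :
    Q (m + 4) =
      fibPoly (1 + X) (m + 5) - (1 + X) ^ 2 * (fibPoly (1 + X) (m + 1) + fibPoly (1 + X) m) := by
  induction m using Nat.twoStepInduction with
  | zero => simp [Q, fibPoly, sum_range_succ]; ring
  | one => simp [Q, fibPoly, sum_range_succ, Nat.choose]; ring
  | more m ih₀ ih₁ =>
    have hQ : Q (m + 6) = Q (m + 5) + (1 + X) * Q (m + 4) := rfl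
    linear_combination hQ + ih₁ + (1 + X) * ih₀ - fibPoly_add_two (1 + X : ℤ[X]) (m + 5)
      + (1 + X) ^ 2 * fibPoly_add_two (1 + X : ℤ[X]) (m + 1)
      + (1 + X) ^ 2 * fibPoly_add_two (1 + X : ℤ[X]) m

theorem Q_formula (n : ℕ) :
    Q n =
      (∑ j ∈ range ((n + 1) / 2 + 1), (Nat.choose (n - j + 1) j : Polynomial ℤ) * (1 + X) ^ j)
      - (∑ j ∈ Icc 2 ((n + 1) / 2), (Nat.choose (n - j - 1) (j - 2) : Polynomial ℤ) * (1 + X) ^ j)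
      - (∑ j ∈ Icc 2 (n / 2), (Nat.choose (n - j - 2) (j - 2) : Polynomial ℤ) * (1 + X) ^ j) := by
  rw [sum_range_choose_eq_fibPoly]
  rcases lt_or_ge n 4 with hn | hn
  · interval_cases n <;> simp [Q, fibPoly, sum_range_succ] <;> ring
  · obtain ⟨m, rfl⟩ := Nat.exists_eq_add_of_le' hn
    rw [sum_Icc_two_choose_eq _ _ (M := m + 1) (by omega) (fun j _ => by omega),
      sum_Icc_two_choose_eq _ _ (M := m) (by omega) (fun j _ => by omega), Q_add_four]
    ring
end

section
/- Define polynomials H(n) ∈ ℤ[x] by H(0)=1, H(1)=x, H(2)=2x, H(3)=3x, H(4)=2x+x², H(5)=4x², and H(n)=x·H(n−2)+x·H(n−3) for n ≥ 6. Then for all n ≥ 3, H(n) = ∑_{k=0}^{⌊n/2⌋} (binom(k+1, n−2k) + binom(k, n−2k−1))·x^k. -/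
/-!
Write `c(n, k) = binom(k+1, n-2k) + binom(k, n-2k-1)`. Pascal's rule applied to both terms gives
`c(n, k+1) = c(n-2, k) + c(n-3, k)`, which is the recurrence of `H` read off at `x ^ (k+1)`; the
constant term `c(n, 0)` vanishes for `n ≥ 2`, and `c(n, k) = 0` once `2k > n`, so truncating the sum
at `⌊n/2⌋` loses nothing. Strong induction from the cases `n = 3, 4, 5` finishes the proof.
-/

open Polynomial Finset

def binom (a b : ℤ) : ℤ := if 0 ≤ b ∧ b ≤ a then Nat.choose a.toNat b.toNat else 0

noncomputable def H : ℕ → Polynomial ℤ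
  | 0 => 1
  | 1 => X
  | 2 => 2 * X
  | 3 => 3 * X
  | 4 => 2 * X + X ^ 2
  | 5 => 4 * X ^ 2
  | (n + 6) => X * H (n + 4) + X * H (n + 3)

lemma binom_eq_zero {a b : ℤ} (h : b < 0 ∨ a < b) : binom a b = 0 := by
  unfold binom
  rw [if_neg]
  omega

lemma binom_natCast (m j : ℕ) : binom m j = m.choose j := by
  unfold binom
  split_ifs
  · simp
  · rw [Nat.choose_eq_zero_of_lt (by omega), Nat.cast_zero]

lemma binom_succ {a : ℤ} (ha : 0 ≤ a) (b : ℤ) :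
    binom (a + 1) b = binom a b + binom a (b - 1) := by
  obtain ⟨m, rfl⟩ := Int.eq_ofNat_of_zero_le ha
  rcases lt_trichotomy b 0 with hb | rfl | hb
  · rw [binom_eq_zero (Or.inl hb), binom_eq_zero (Or.inl hb), binom_eq_zero (by omega), add_zero]
  · simp [binom]
    omega
  · obtain ⟨j, rfl⟩ : ∃ j : ℕ, b = j + 1 := ⟨(b - 1).toNat, by omega⟩
    rw [add_sub_cancel_right]
    simp only [← Nat.cast_succ, binom_natCast, Nat.choose_succ_succ', Nat.cast_add, add_comm]

def cubeCoeff (n : ℤ) (k : ℕ) : ℤ :=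
  binom ((k : ℤ) + 1) (n - 2 * k) + binom (k : ℤ) (n - 2 * k - 1)

lemma cubeCoeff_succ (n : ℤ) (k : ℕ) :
    cubeCoeff n (k + 1) = cubeCoeff (n - 2) k + cubeCoeff (n - 3) k := by
  have h₁ := binom_succ (a := (k : ℤ) + 1) (by positivity) (n - 2 - 2 * k)
  have h₂ := binom_succ (a := (k : ℤ)) (by positivity) (n - 2 - 2 * k - 1)
  simp only [cubeCoeff]
  push_cast
  ring_nf at h₁ h₂ ⊢
  linear_combination h₁ + h₂

lemma cubeCoeff_eq_zero_of_lt {n : ℤ} {k : ℕ} (h : n < 2 * k) : cubeCoeff n k = 0 := by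
  rw [cubeCoeff, binom_eq_zero (by omega), binom_eq_zero (by omega), add_zero]

lemma cubeCoeff_zero {n : ℤ} (h : 2 ≤ n) : cubeCoeff n 0 = 0 := by
  rw [cubeCoeff, binom_eq_zero (by omega), binom_eq_zero (by omega), add_zero]

noncomputable def cubePoly (n : ℕ) : ℤ[X] :=
  ∑ k ∈ range (n / 2 + 1), C (cubeCoeff n k) * X ^ k

lemma coeff_cubePoly (n i : ℕ) : (cubePoly n).coeff i = cubeCoeff n i := by
  simp only [cubePoly, finsetSum_coeff, coeff_C_mul_X_pow, sum_ite_eq, mem_range]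
  split_ifs with h
  · rfl
  · exact (cubeCoeff_eq_zero_of_lt (by omega)).symm

lemma cubePoly_add_six (n : ℕ) :
    cubePoly (n + 6) = X * cubePoly (n + 4) + X * cubePoly (n + 3) := by
  ext (_ | i)
  · simpa [coeff_cubePoly] using cubeCoeff_zero (n := (n : ℤ) + 6) (by omega)
  · simp only [coeff_add, coeff_X_mul, coeff_cubePoly, cubeCoeff_succ]
    push_cast
    ring_nf

lemma H_eq_cubePoly {n : ℕ} (hn : 3 ≤ n) : H n = cubePoly n := by
  induction n using Nat.strong_induction_on with
  | _ n ih =>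
    match n, hn with
    | 3, _ | 4, _ | 5, _ => norm_num [H, cubePoly, cubeCoeff, binom, sum_range_succ, Int.toNat]
    | n + 6, _ =>
      rw [H, ih (n + 4) (by omega) (by omega), ih (n + 3) (by omega) (by omega), cubePoly_add_six]

theorem H_formula (n : ℕ) (hn : 3 ≤ n) :
    H n = ∑ k ∈ range (n / 2 + 1),
      C (binom ((k : ℤ) + 1) ((n : ℤ) - 2 * k) + binom (k : ℤ) ((n : ℤ) - 2 * k - 1)) * X ^ k :=
  H_eq_cubePoly hn
end
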